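/- Let s ≥ 1, ρ > 0, M > 0, and let u ∈ H₀^{ρ,s} be real-valued with ‖u‖_{ρ,s} ≤ M, and κ > 100 C_s M. Then the gauge variable m(κ,u) = (L_u + κ)^{−1} u₊ belongs to H₊^{ρ,s+1} and satisfies ‖m(κ,u)‖_{ρ,s} ≤ ‖u‖_{ρ,s}/(κ − C_s‖u‖_{ρ,s}); moreover it solves −2i∂ₓ m + C₊(u(m−1)) + κ m = 0, so that its spatial derivative is given by the bounded multilinear expression ∂ₓ m = −(i/2)(κ m + C₊(u(m−1))). -/
import Mathlib


/-!
Common framework: we model periodic functions on the torus 𝕋 = ℝ/2πℤ by their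
sequences of Fourier coefficients `u : ℤ → ℂ`.  Products of functions become
convolutions of coefficients, the analytic Sobolev norm is an exponentially
weighted ℓ²-sum, and the Hardy space L²₊ is modelled as `lp`-space over the
positive integer frequencies.
-/

noncomputable section
open Filter Set
open scoped BigOperators Topology

namespace BO

/-- Japanese bracket `⟨n⟩ = (1+n²)^{1/2}`. -/
def jb (n : ℤ) : ℝ := Real.sqrt (1 + (n : ℝ) ^ 2)

/-- The weight `⟨n⟩^s e^{ρ|n|}` of the analytic Sobolev space `H^{ρ,s}`. -/
def wt (ρ s : ℝ) (n : ℤ) : ℝ := jb n ^ s * Real.exp (ρ * |(n : ℝ)|)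

/-- Membership in `H^{ρ,s}` (for the Fourier coefficients `u`). -/
def MemH (ρ s : ℝ) (u : ℤ → ℂ) : Prop :=
  Summable fun n : ℤ => wt ρ s n ^ 2 * ‖u n‖ ^ 2

/-- The analytic Sobolev norm `‖u‖_{ρ,s}`. -/
def anorm (ρ s : ℝ) (u : ℤ → ℂ) : ℝ :=
  Real.sqrt (∑' n : ℤ, wt ρ s n ^ 2 * ‖u n‖ ^ 2)

/-- The (normalized) `L²` norm. -/
def l2norm (u : ℤ → ℂ) : ℝ := Real.sqrt (∑' n : ℤ, ‖u n‖ ^ 2)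

/-- `u` is the coefficient sequence of a real-valued function. -/
def IsReal (u : ℤ → ℂ) : Prop := ∀ n : ℤ, u (-n) = (starRingEnd ℂ) (u n)

/-- Fourier coefficients of the pointwise product (= convolution). -/
def fmul (u v : ℤ → ℂ) : ℤ → ℂ := fun n => ∑' m : ℤ, u (n - m) * v m

/-- Projection onto positive frequencies, `C₊`. -/
def Cplus (u : ℤ → ℂ) : ℤ → ℂ := fun n => if 0 < n then u n else 0

/-- Projection onto negative frequencies, `C₋`. -/
def Cminus (u : ℤ → ℂ) : ℤ → ℂ := fun n => if n < 0 then u n else 0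

/-- Projection onto the zero mode (spatial mean), `P₀`. -/
def P0 (u : ℤ → ℂ) : ℤ → ℂ := fun n => if n = 0 then u 0 else 0

/-- Membership in the positive-frequency space `H₊^{ρ,s}`. -/
def MemHplus (ρ s : ℝ) (u : ℤ → ℂ) : Prop :=
  MemH ρ s u ∧ ∀ n : ℤ, n ≤ 0 → u n = 0

/-- Coefficients of the constant function `1`. -/
def delta0 : ℤ → ℂ := fun n => if n = 0 then 1 else 0

/-- Spatial derivative `∂ₓ` (multiplier `i n`). -/
def dx (u : ℤ → ℂ) : ℤ → ℂ := fun n => Complex.I * (n : ℂ) * u n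

/-- Coefficients of the complex conjugate function. -/
def conjFun (u : ℤ → ℂ) : ℤ → ℂ := fun n => (starRingEnd ℂ) (u (-n))

/-- The Toeplitz operator `T_u f = C₊(uf)`. -/
def Toep (u f : ℤ → ℂ) : ℤ → ℂ := Cplus (fmul u f)

/-- The Lax operator `L_u f = -2i∂ₓ f + C₊(uf)` (multiplier `2n` plus Toeplitz). -/
def LaxOp (u f : ℤ → ℂ) : ℤ → ℂ := fun n => 2 * (n : ℂ) * f n + Toep u f n

/-- The free resolvent `R₀(κ) = (L₀+κ)⁻¹` on positive frequencies. -/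
def R0 (κ : ℝ) (u : ℤ → ℂ) : ℤ → ℂ :=
  fun n => if 0 < n then (2 * (n : ℂ) + (κ : ℂ))⁻¹ * u n else 0

/-- The algebra constant `C_s = 2^{s+1} (Σ_k ⟨k⟩^{-2s})^{1/2}` of `H^{ρ,s}`. -/
def Cs (s : ℝ) : ℝ := (2 : ℝ) ^ (s + 1) * Real.sqrt (∑' k : ℤ, jb k ^ (-(2 * s)))

/-- Positive integer frequencies. -/
abbrev PosZ := {n : ℤ // 0 < n}

/-- The Hardy space `L²₊(𝕋)` in Fourier coordinates. -/
abbrev Hardy := lp (fun _ : PosZ => ℂ) 2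

/-- The `H¹₊` subset of the Hardy space. -/
def H1set : Set Hardy := {f | Summable fun n : PosZ => (1 + ((n : ℤ) : ℝ) ^ 2) * ‖f n‖ ^ 2}

/-- `L²` norm of a positive-frequency coefficient sequence. -/
def l2p (f : PosZ → ℂ) : ℝ := Real.sqrt (∑' n : PosZ, ‖f n‖ ^ 2)

/-- Action of the Lax operator `L_v` on positive-frequency coefficients. -/
def laxC (v : ℤ → ℂ) (f : PosZ → ℂ) : PosZ → ℂ :=
  fun n => 2 * ((n : ℤ) : ℂ) * f n + ∑' m : PosZ, v ((n : ℤ) - (m : ℤ)) * f m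

/-- Exponentially shifted symbol: `(eshift σ v)(k) = e^{σ k} v(k)`. -/
def eshift (σ : ℝ) (v : ℤ → ℂ) : ℤ → ℂ := fun k => (Real.exp (σ * (k : ℝ)) : ℂ) * v k

/-- `ψ = e^{(ρ/2)L_v} v₊`, characterized by the backward flow
`φ(τ) = e^{(ρ/2-τ)L_v} v₊`: a strongly `C¹` curve in `H¹₊ ⊂ L²₊` with
`φ' = -L_v φ`, `φ(0) = ψ` and `φ(ρ/2) = v₊`. -/
def IsSpecState (ρ : ℝ) (v : ℤ → ℂ) (ψ : PosZ → ℂ) : Prop :=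
  ∃ φ : ℝ → PosZ → ℂ,
    φ 0 = ψ ∧
    (∀ n : PosZ, φ (ρ / 2) n = v (n : ℤ)) ∧
    (∀ τ ∈ Set.Icc (0 : ℝ) (ρ / 2),
      Summable fun n : PosZ => (1 + ((n : ℤ) : ℝ) ^ 2) * ‖φ τ n‖ ^ 2) ∧
    (∀ τ ∈ Set.Icc (0 : ℝ) (ρ / 2),
      Filter.Tendsto
        (fun τ' : ℝ =>
          l2p (fun n => φ τ' n - φ τ n + ((τ' - τ : ℝ) : ℂ) * laxC v (φ τ) n) / |τ' - τ|)
        (nhdsWithin τ (Set.Icc (0 : ℝ) (ρ / 2) \ {τ})) (nhds 0))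

/-- The exponential spectral energy `E_ρ(v) = ‖ψ_v‖² + ‖(1/2)L_v ψ_v‖²`
expressed through the state `ψ = e^{(ρ/2)L_v}v₊`. -/
def Erho (v : ℤ → ℂ) (ψ : PosZ → ℂ) : ℝ :=
  (∑' n : PosZ, ‖ψ n‖ ^ 2) + (1 / 4) * ∑' n : PosZ, ‖laxC v ψ n‖ ^ 2

/-- The geometric constant `c₁ = (1/2)(π²/6 - (π coth π - 1)/2)^{1/2}`. -/
def c1const : ℝ :=
  (1 / 2) * Real.sqrt (Real.pi ^ 2 / 6 -
    (Real.pi * (Real.cosh Real.pi / Real.sinh Real.pi) - 1) / 2)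

/-- The geometric constant `c₂ = (π coth π - 1)^{1/2}`. -/
def c2const : ℝ :=
  Real.sqrt (Real.pi * (Real.cosh Real.pi / Real.sinh Real.pi) - 1)

/-- The geometric bounding function `f(x) = (1/√2) e^{-c₁x}(x - (√2/2)c₂x²)`. -/
def fbar (c₁ c₂ x : ℝ) : ℝ :=
  (1 / Real.sqrt 2) * Real.exp (-c₁ * x) * (x - (Real.sqrt 2 / 2) * c₂ * x ^ 2)

/-- `m` is the resolvent gauge variable `m(κ,u) = (L_u+κ)⁻¹ u₊`:
the unique positive-frequency `ℓ²` solution of `(L_u+κ)m = u₊`. -/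
def IsGauge (κ : ℝ) (u m : ℤ → ℂ) : Prop :=
  (∀ n : ℤ, n ≤ 0 → m n = 0) ∧ (Summable fun n : ℤ => ‖m n‖ ^ 2) ∧
  ∀ n : ℤ, LaxOp u m n + (κ : ℂ) * m n = Cplus u n

-- The gauge variable, selected by choice (it is unique for `κ` large).
open scoped Classical in
def gauge (κ : ℝ) (u : ℤ → ℂ) : ℤ → ℂ :=
  if h : ∃ m : ℤ → ℂ, IsGauge κ u m then h.choose else 0

/-- The spectral generating functional `β(κ;u) = ⟨u₊, m(κ,u)⟩_{L²}`. -/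
def beta (κ : ℝ) (u : ℤ → ℂ) : ℂ :=
  ∑' n : ℤ, Cplus u n * (starRingEnd ℂ) (gauge κ u n)

/-- Right-hand side of the Benjamin–Ono equation,
`∂ₜ u = -H∂ₓₓu - u∂ₓu` (the multiplier of `H∂ₓₓ` is `i n |n|`). -/
def BOrhs (u : ℤ → ℂ) : ℤ → ℂ :=
  fun n => -(Complex.I * (n : ℂ) * ((|n| : ℤ) : ℂ) * u n) - fmul u (dx u) n

/-- `u` is a global solution of the regularized `H_κ` flow
`∂ₜu = -(κ/2)∂ₓu + (κ²/2)∂ₓ(m + m̄ - |m|²)` with data `u₀`,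
continuous in time with values in `H₀^{ρ,1}`. -/
def IsHkFlow (ρ κ : ℝ) (u₀ : ℤ → ℂ) (u : ℝ → ℤ → ℂ) : Prop :=
  u 0 = u₀ ∧
  (∀ t : ℝ, MemH ρ 1 (u t) ∧ u t 0 = 0 ∧ IsReal (u t)) ∧
  (∀ t₀ : ℝ, Filter.Tendsto (fun t => anorm ρ 1 (fun n => u t n - u t₀ n))
      (nhds t₀) (nhds 0)) ∧
  (∀ t : ℝ, ∃ m : ℤ → ℂ, IsGauge κ (u t) m ∧
    ∀ n : ℤ, HasDerivAt (fun t' => u t' n)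
      (-((κ : ℂ) / 2) * (Complex.I * (n : ℂ) * u t n) +
        ((κ : ℂ) ^ 2 / 2) * (Complex.I * (n : ℂ) *
          (m n + conjFun m n - fmul m (conjFun m) n))) t)

/-- `u` is a global classical solution of the Benjamin–Ono equation with data `u₀`:
for every `T > 0` and `ε ∈ (0,ρ/6)` it lies in
`C¹([-T,T]; H₀^{ρ-3ε,1}) ∩ C([-T,T]; H₀^{ρ-ε,1})` and satisfies
`∂ₜu = -H∂ₓₓu - u∂ₓu` (time derivative in `H₀^{ρ-3ε,1}`). -/
def IsBOSol (ρ : ℝ) (u₀ : ℤ → ℂ) (u : ℝ → ℤ → ℂ) : Prop :=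
  u 0 = u₀ ∧
  (∀ t : ℝ, u t 0 = 0 ∧ IsReal (u t)) ∧
  ∀ T > (0 : ℝ), ∀ ε ∈ Set.Ioo (0 : ℝ) (ρ / 6),
    (∀ t ∈ Set.Icc (-T) T, MemH (ρ - ε) 1 (u t)) ∧
    (∀ t₀ ∈ Set.Icc (-T) T,
      Filter.Tendsto (fun t => anorm (ρ - ε) 1 (fun n => u t n - u t₀ n))
        (nhdsWithin t₀ (Set.Icc (-T) T)) (nhds 0)) ∧
    (∀ t₀ ∈ Set.Icc (-T) T, MemH (ρ - 3 * ε) 1 (BOrhs (u t₀)) ∧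
      Filter.Tendsto (fun t =>
          anorm (ρ - 3 * ε) 1
            (fun n => u t n - u t₀ n - ((t - t₀ : ℝ) : ℂ) * BOrhs (u t₀) n) / |t - t₀|)
        (nhdsWithin t₀ (Set.Icc (-T) T \ {t₀})) (nhds 0)) ∧
    (∀ t₀ ∈ Set.Icc (-T) T,
      Filter.Tendsto (fun t => anorm (ρ - 3 * ε) 1 (fun n => BOrhs (u t) n - BOrhs (u t₀) n))
        (nhdsWithin t₀ (Set.Icc (-T) T)) (nhds 0))


lemma one_le_jb (n : ℤ) : 1 ≤ jb n := by
  rw [jb]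
  rw [show (1:ℝ) = Real.sqrt 1 from (Real.sqrt_one).symm]
  exact Real.sqrt_le_sqrt (by nlinarith [sq_nonneg ((n:ℝ)), Real.sqrt_one])

lemma jb_pos (n : ℤ) : 0 < jb n := lt_of_lt_of_le one_pos (one_le_jb n)

lemma jb_sub_add (n k : ℤ) : jb n ≤ jb (n - k) + jb k := by
  have h : jb n = jb ((n - k) + k) := by norm_num
  rw [h]
  set a : ℝ := ((n - k : ℤ) : ℝ)
  set b : ℝ := ((k : ℤ) : ℝ)
  have hab : (((n - k) + k : ℤ) : ℝ) = a + b := by push_cast [a, b]; ring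
  rw [jb, jb, jb, hab]
  have h1 : Real.sqrt (1 + a ^ 2) * Real.sqrt (1 + b ^ 2) ≥ a * b := by
    rw [← Real.sqrt_mul (by positivity)]
    calc a * b ≤ |a * b| := le_abs_self _
    _ = Real.sqrt ((a*b)^2) := by rw [Real.sqrt_sq_eq_abs]
    _ ≤ Real.sqrt ((1+a^2)*(1+b^2)) := Real.sqrt_le_sqrt (by nlinarith [sq_nonneg a, sq_nonneg b, sq_nonneg (a*b)])
  have hs1 : (0:ℝ) ≤ Real.sqrt (1 + a^2) := Real.sqrt_nonneg _
  have hs2 : (0:ℝ) ≤ Real.sqrt (1 + b^2) := Real.sqrt_nonneg _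
  have e1 : Real.sqrt (1+a^2) ^ 2 = 1 + a^2 := Real.sq_sqrt (by positivity)
  have e2 : Real.sqrt (1+b^2) ^ 2 = 1 + b^2 := Real.sq_sqrt (by positivity)
  have e3 : Real.sqrt (1+(a+b)^2) ^ 2 = 1 + (a+b)^2 := Real.sq_sqrt (by positivity)
  nlinarith [Real.sqrt_nonneg (1 + (a+b)^2)]

lemma wt_pos {ρ s : ℝ} (n : ℤ) : 0 < wt ρ s n := by
  unfold wt
  have := jb_pos n
  positivity

lemma one_le_wt {ρ s : ℝ} (hρ : 0 ≤ ρ) (hs : 0 ≤ s) (n : ℤ) : 1 ≤ wt ρ s n := by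
  unfold wt
  have h1 : (1:ℝ) ≤ jb n ^ s := Real.one_le_rpow (one_le_jb n) hs
  have h2 : (1:ℝ) ≤ Real.exp (ρ * |(n:ℝ)|) := Real.one_le_exp (by positivity)
  nlinarith

/-- Key weight splitting estimate. -/
lemma wt_split {ρ s : ℝ} (hρ : 0 ≤ ρ) (hs : 0 ≤ s) (n k : ℤ) :
    wt ρ s n ≤ (2:ℝ) ^ s * (wt ρ s (n - k) * wt ρ s k) * (jb k ^ (-s) + jb (n - k) ^ (-s)) := by
  have hj1 := jb_pos (n - k); have hj2 := jb_pos k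
  have hE : Real.exp (ρ * |(n:ℝ)|) ≤ Real.exp (ρ * |((n-k:ℤ):ℝ)|) * Real.exp (ρ * |((k:ℤ):ℝ)|) := by
    rw [← Real.exp_add]
    apply Real.exp_le_exp.2
    have : |(n:ℝ)| ≤ |((n-k:ℤ):ℝ)| + |((k:ℤ):ℝ)| := by
      push_cast
      calc |(n:ℝ)| = |((n:ℝ) - k) + k| := by ring_nf
      _ ≤ |(n:ℝ) - k| + |(k:ℝ)| := abs_add_le _ _
    nlinarith
  have hjs : jb n ^ s ≤ (2:ℝ)^s * (jb (n-k) ^ s + jb k ^ s) := by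
    have h1 : jb n ≤ jb (n-k) + jb k := jb_sub_add n k
    have h2 : jb (n-k) + jb k ≤ 2 * max (jb (n-k)) (jb k) := by
      rcases max_cases (jb (n-k)) (jb k) with ⟨h, _⟩ | ⟨h, _⟩ <;> rw [h] <;> linarith [le_max_left (jb (n-k)) (jb k), le_max_right (jb (n-k)) (jb k)]
    calc jb n ^ s ≤ (2 * max (jb (n-k)) (jb k)) ^ s :=
          Real.rpow_le_rpow (le_of_lt (jb_pos n)) (h1.trans h2) hs
    _ = (2:ℝ)^s * max (jb (n-k)) (jb k) ^ s := Real.mul_rpow (by norm_num) (by positivity)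
    _ ≤ (2:ℝ)^s * (jb (n-k) ^ s + jb k ^ s) := by
        apply mul_le_mul_of_nonneg_left _ (by positivity)
        rcases max_cases (jb (n-k)) (jb k) with ⟨h, _⟩ | ⟨h, _⟩ <;> rw [h] <;>
          [linarith [Real.rpow_nonneg (le_of_lt hj2) s]; linarith [Real.rpow_nonneg (le_of_lt hj1) s]]
  have key : wt ρ s n ≤ (2:ℝ)^s * (jb (n-k) ^ s + jb k ^ s) * (Real.exp (ρ * |((n-k:ℤ):ℝ)|) * Real.exp (ρ * |((k:ℤ):ℝ)|)) := by
    unfold wt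
    have h0 : 0 ≤ Real.exp (ρ * |(n:ℝ)|) := le_of_lt (Real.exp_pos _)
    calc jb n ^ s * Real.exp (ρ * |(n:ℝ)|)
        ≤ ((2:ℝ)^s * (jb (n-k) ^ s + jb k ^ s)) * Real.exp (ρ * |(n:ℝ)|) := by
          apply mul_le_mul_of_nonneg_right hjs h0
      _ ≤ ((2:ℝ)^s * (jb (n-k) ^ s + jb k ^ s)) * (Real.exp (ρ * |((n-k:ℤ):ℝ)|) * Real.exp (ρ * |((k:ℤ):ℝ)|)) := by
          apply mul_le_mul_of_nonneg_left hE (by positivity)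
      _ = _ := by ring
  refine key.trans (le_of_eq ?_)
  unfold wt
  have e1 : jb k ^ (-s) = (jb k ^ s)⁻¹ := by rw [Real.rpow_neg (le_of_lt hj2)]
  have e2 : jb (n-k) ^ (-s) = (jb (n-k) ^ s)⁻¹ := by rw [Real.rpow_neg (le_of_lt hj1)]
  rw [e1, e2]
  field_simp

/-- Summability of `⟨k⟩^{-2s}` for `s ≥ 1`. -/
lemma summable_jb_neg (s : ℝ) (hs : 1 ≤ s) : Summable (fun k : ℤ => jb k ^ (-(2 * s))) := by
  have base : Summable (fun n : ℤ => 1 / |(n:ℝ) + 1/2| ^ (2:ℝ)) :=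
    (Real.summable_one_div_int_add_rpow (1/2) 2).2 (by norm_num)
  apply Summable.of_nonneg_of_le (fun k => Real.rpow_nonneg (le_of_lt (jb_pos k)) _)
    (fun k => ?_) (base.mul_left (2 ^ (2:ℝ)))
  have hjk := jb_pos k
  have h1 : jb k ^ (-(2*s)) ≤ jb k ^ (-(2:ℝ)) :=
    Real.rpow_le_rpow_of_exponent_le (one_le_jb k) (by linarith)
  refine h1.trans ?_
  -- jb k ^ (-2) = 1/(1+k^2) ≤ 4 / |k+1/2|^2
  have e : jb k ^ (-(2:ℝ)) = (1 + (k:ℝ)^2)⁻¹ := by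
    rw [Real.rpow_neg hjk.le, show ((2:ℝ)) = ((2:ℕ):ℝ) by norm_num, Real.rpow_natCast, jb,
      Real.sq_sqrt (show (0:ℝ) ≤ 1 + (k:ℝ)^2 by positivity)]
  rw [e]
  have habs : |(k:ℝ) + 1/2| ^ (2:ℝ) = ((k:ℝ) + 1/2)^2 := by
    rw [show ((2:ℝ)) = ((2:ℕ):ℝ) by norm_num, Real.rpow_natCast, sq_abs]
  rw [habs]
  have hk : ((k:ℝ) + 1/2)^2 ≤ 4 * (1 + (k:ℝ)^2) := by nlinarith [sq_nonneg ((k:ℝ) - 1/2), sq_nonneg ((k:ℝ)+1/2)]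
  have hpos : (0:ℝ) < 1 + (k:ℝ)^2 := by positivity
  have hpos2 : (0:ℝ) < ((k:ℝ)+1/2)^2 := by
    have : (k:ℝ) + 1/2 ≠ 0 := by
      intro h
      have : (2*k : ℝ) = -1 := by linarith
      have : ((2*k : ℤ) : ℝ) = ((-1 : ℤ) : ℝ) := by push_cast; linarith
      have := Int.cast_injective this
      omega
    positivity
  rw [show (2:ℝ)^(2:ℝ) = 4 by rw [show ((2:ℝ)) = ((2:ℕ):ℝ) by norm_num, Real.rpow_natCast]; norm_num]
  rw [mul_one_div, inv_eq_one_div, div_le_div_iff₀ hpos hpos2]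
  nlinarith


/-- Cauchy–Schwarz for tsums of nonnegative reals. -/
lemma tsum_CS {f g : ℤ → ℝ} (hf0 : ∀ n, 0 ≤ f n) (hg0 : ∀ n, 0 ≤ g n)
    (hf : Summable fun n => f n ^ 2) (hg : Summable fun n => g n ^ 2) :
    Summable (fun n => f n * g n) ∧
    ∑' n, f n * g n ≤ Real.sqrt (∑' n, f n ^ 2) * Real.sqrt (∑' n, g n ^ 2) := by
  have hsum : Summable fun n => f n * g n := by
    apply Summable.of_nonneg_of_le (fun n => mul_nonneg (hf0 n) (hg0 n))
      (fun n => ?_) ((hf.add hg).mul_left (1/2))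
    nlinarith [sq_nonneg (f n - g n)]
  refine ⟨hsum, Summable.tsum_le_of_sum_le hsum fun F => ?_⟩
  have h1 : (∑ i ∈ F, f i * g i) ^ 2 ≤ (∑ i ∈ F, f i ^ 2) * ∑ i ∈ F, g i ^ 2 :=
    Finset.sum_mul_sq_le_sq_mul_sq F f g
  have h2 : ∑ i ∈ F, f i ^ 2 ≤ ∑' n, f n ^ 2 := Summable.sum_le_tsum F (fun i _ => sq_nonneg _) hf
  have h3 : ∑ i ∈ F, g i ^ 2 ≤ ∑' n, g n ^ 2 := Summable.sum_le_tsum F (fun i _ => sq_nonneg _) hg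
  have h4 : (0:ℝ) ≤ ∑ i ∈ F, f i * g i := Finset.sum_nonneg fun i _ => mul_nonneg (hf0 i) (hg0 i)
  have h5 : (0:ℝ) ≤ ∑ i ∈ F, f i ^ 2 := Finset.sum_nonneg fun i _ => sq_nonneg _
  calc ∑ i ∈ F, f i * g i = Real.sqrt ((∑ i ∈ F, f i * g i)^2) := (Real.sqrt_sq h4).symm
  _ ≤ Real.sqrt ((∑' n, f n ^ 2) * ∑' n, g n ^ 2) := by
      apply Real.sqrt_le_sqrt
      calc (∑ i ∈ F, f i * g i) ^ 2 ≤ (∑ i ∈ F, f i ^ 2) * ∑ i ∈ F, g i ^ 2 := h1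
      _ ≤ (∑' n, f n ^ 2) * ∑' n, g n ^ 2 := by
          apply mul_le_mul h2 h3 (Finset.sum_nonneg fun i _ => sq_nonneg _)
          exact tsum_nonneg fun n => sq_nonneg _
  _ = _ := Real.sqrt_mul (tsum_nonneg fun n => sq_nonneg _) _

/-- ℓ² Minkowski inequality for tsums. -/
lemma tsum_minkowski {p q : ℤ → ℝ} (hp0 : ∀ n, 0 ≤ p n) (hq0 : ∀ n, 0 ≤ q n)
    (hp : Summable fun n => p n ^ 2) (hq : Summable fun n => q n ^ 2) :
    Summable (fun n => (p n + q n) ^ 2) ∧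
    Real.sqrt (∑' n, (p n + q n) ^ 2) ≤
      Real.sqrt (∑' n, p n ^ 2) + Real.sqrt (∑' n, q n ^ 2) := by
  obtain ⟨hpq, hcs⟩ := tsum_CS hp0 hq0 hp hq
  have hsum : Summable fun n => (p n + q n)^2 := by
    have : ∀ n, (p n + q n)^2 = p n ^2 + 2*(p n * q n) + q n ^ 2 := fun n => by ring
    simpa [this] using (hp.add ((hpq.mul_left 2))).add hq
  refine ⟨hsum, ?_⟩
  have e : ∑' n, (p n + q n)^2 = (∑' n, p n^2) + 2 * (∑' n, p n * q n) + ∑' n, q n ^2 := by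
    have h1 : ∀ n, (p n + q n)^2 = (p n^2 + 2*(p n * q n)) + q n ^2 := fun n => by ring
    calc ∑' n, (p n+q n)^2 = ∑' n, ((p n^2 + 2*(p n*q n)) + q n^2) := tsum_congr h1
    _ = (∑' n, (p n^2 + 2*(p n*q n))) + ∑' n, q n^2 := Summable.tsum_add (hp.add ((hpq.mul_left 2))) hq
    _ = ((∑' n, p n^2) + ∑' n, 2*(p n*q n)) + ∑' n, q n^2 := by rw [Summable.tsum_add hp (hpq.mul_left 2)]
    _ = _ := by rw [tsum_mul_left]
  set A := ∑' n, p n ^ 2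
  set B := ∑' n, q n ^ 2
  have hA : 0 ≤ A := tsum_nonneg fun n => sq_nonneg _
  have hB : 0 ≤ B := tsum_nonneg fun n => sq_nonneg _
  have key : ∑' n, (p n + q n)^2 ≤ (Real.sqrt A + Real.sqrt B)^2 := by
    rw [e]
    nlinarith [hcs, Real.sq_sqrt hA, Real.sq_sqrt hB, Real.sqrt_nonneg A, Real.sqrt_nonneg B]
  calc Real.sqrt (∑' n, (p n + q n)^2) ≤ Real.sqrt ((Real.sqrt A + Real.sqrt B)^2) :=
        Real.sqrt_le_sqrt key
  _ = Real.sqrt A + Real.sqrt B := Real.sqrt_sq (by positivity)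

/-- If `0 ≤ x ≤ y` pointwise with `y ∈ ℓ²`, then `x ∈ ℓ²` with smaller norm. -/
lemma tsum_sq_mono {x y : ℤ → ℝ} (hx0 : ∀ n, 0 ≤ x n) (hxy : ∀ n, x n ≤ y n)
    (hy : Summable fun n => y n ^ 2) :
    Summable (fun n => x n ^ 2) ∧ Real.sqrt (∑' n, x n ^2) ≤ Real.sqrt (∑' n, y n ^2) := by
  have h : ∀ n, x n ^ 2 ≤ y n ^ 2 := fun n => by nlinarith [hx0 n, hxy n]
  have hs : Summable fun n => x n ^ 2 :=
    Summable.of_nonneg_of_le (fun n => sq_nonneg _) h hy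
  exact ⟨hs, Real.sqrt_le_sqrt (Summable.tsum_le_tsum h hs hy)⟩

/-- Young's inequality `ℓ¹ * ℓ² → ℓ²` on `ℤ` (nonnegative version, sqrt form). -/
lemma tsum_young {b a : ℤ → ℝ} (hb0 : ∀ n, 0 ≤ b n) (ha0 : ∀ n, 0 ≤ a n)
    (hb : Summable b) (ha : Summable fun n => a n ^ 2) :
    (∀ n, Summable fun k => b (n - k) * a k) ∧
    Summable (fun n => (∑' k, b (n - k) * a k) ^ 2) ∧
    Real.sqrt (∑' n, (∑' k, b (n - k) * a k) ^ 2) ≤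
      (∑' j, b j) * Real.sqrt (∑' k, a k ^ 2) := by
  set B := ∑' j, b j with hB
  have hBnn : 0 ≤ B := tsum_nonneg hb0
  set T := ∑' k, a k ^ 2 with hT
  have hTnn : 0 ≤ T := tsum_nonneg fun n => sq_nonneg _
  -- a is bounded by √T
  have habd : ∀ k, a k ≤ Real.sqrt T := by
    intro k
    have h1 : a k ^ 2 ≤ T := Summable.le_tsum ha k fun j _ => sq_nonneg _
    calc a k = Real.sqrt (a k ^2) := (Real.sqrt_sq (ha0 k)).symm
    _ ≤ Real.sqrt T := Real.sqrt_le_sqrt h1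
  -- translated b summable
  have hbt : ∀ n : ℤ, Summable fun k => b (n - k) := fun n =>
    ((Equiv.subLeft n).summable_iff (f := b)).2 hb
  have hbtsum : ∀ n : ℤ, ∑' k, b (n - k) = B := fun n =>
    ((Equiv.subLeft n).tsum_eq (f := b))
  have hinner : ∀ n, Summable fun k => b (n - k) * a k := by
    intro n
    apply Summable.of_nonneg_of_le (fun k => mul_nonneg (hb0 _) (ha0 _))
      (fun k => mul_le_mul_of_nonneg_left (habd k) (hb0 _)) ((hbt n).mul_right _)
  refine ⟨hinner, ?_⟩
  -- the double family (n,k) ↦ b (n-k) * a k ^ 2 is summable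
  have hprod : Summable (fun x : ℤ × ℤ => b x.1 * (a x.2)^2) :=
    hb.mul_of_nonneg ha hb0 (fun k => sq_nonneg _)
  let e : (ℤ × ℤ) ≃ (ℤ × ℤ) :=
    ⟨fun x => (x.1 + x.2, x.2), fun x => (x.1 - x.2, x.2),
      fun x => by simp, fun x => by simp⟩
  have hcomp : ((fun x : ℤ × ℤ => b (x.1 - x.2) * (a x.2)^2) ∘ e) = fun x : ℤ × ℤ => b x.1 * (a x.2)^2 := by
    funext x
    simp [e]
  have hprod2 : Summable (fun x : ℤ × ℤ => b (x.1 - x.2) * (a x.2)^2) :=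
    (e.summable_iff (f := fun x : ℤ × ℤ => b (x.1 - x.2) * (a x.2)^2)).1 (by rw [hcomp]; exact hprod)
  -- inner sums of that family
  have hg : ∀ n, HasSum (fun k => b (n - k) * (a k)^2) (∑' k, b (n - k) * (a k)^2) := by
    intro n
    apply Summable.hasSum
    apply Summable.of_nonneg_of_le (fun k => mul_nonneg (hb0 _) (sq_nonneg _))
      (fun k => ?_) ((hbt n).mul_right T)
    exact mul_le_mul_of_nonneg_left (Summable.le_tsum ha k fun j _ => sq_nonneg _) (hb0 _)
  have houter : HasSum (fun n => ∑' k, b (n - k) * (a k)^2) (∑' x : ℤ × ℤ, b (x.1 - x.2) * (a x.2)^2) :=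
    hprod2.hasSum.prod_fiberwise hg
  have htot : (∑' x : ℤ × ℤ, b (x.1 - x.2) * (a x.2)^2) = B * T := by
    calc (∑' x : ℤ × ℤ, b (x.1 - x.2) * (a x.2)^2)
        = ∑' x : ℤ × ℤ, b x.1 * (a x.2)^2 := by
          rw [← e.tsum_eq (f := fun x : ℤ × ℤ => b (x.1 - x.2) * (a x.2)^2)]
          exact tsum_congr fun x => by simp [e]
    _ = B * T := by
          rw [Summable.tsum_prod hprod]
          have h1 : ∀ n : ℤ, ∑' k : ℤ, b n * (a k)^2 = b n * T := fun n => tsum_mul_left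
          rw [tsum_congr h1, tsum_mul_right]
  -- pointwise Cauchy–Schwarz
  have hpt : ∀ n, (∑' k, b (n - k) * a k)^2 ≤ B * ∑' k, b (n - k) * (a k)^2 := by
    intro n
    have hf : Summable fun k => (Real.sqrt (b (n - k)))^2 := by
      simpa [Real.sq_sqrt, hb0] using hbt n
    have hgs : Summable fun k => (Real.sqrt (b (n - k)) * a k)^2 := by
      apply ((hg n).summable).congr
      intro k
      rw [mul_pow, Real.sq_sqrt (hb0 _)]
    obtain ⟨_, hcs⟩ := tsum_CS (f := fun k => Real.sqrt (b (n-k)))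
      (g := fun k => Real.sqrt (b (n-k)) * a k)
      (fun k => Real.sqrt_nonneg _) (fun k => mul_nonneg (Real.sqrt_nonneg _) (ha0 _)) hf hgs
    have e1 : (fun k => Real.sqrt (b (n-k)) * (Real.sqrt (b (n-k)) * a k)) = fun k => b (n-k) * a k := by
      funext k
      rw [← mul_assoc, Real.mul_self_sqrt (hb0 _)]
    have e2 : (fun k => (Real.sqrt (b (n-k)))^2) = fun k => b (n - k) := by
      funext k; rw [Real.sq_sqrt (hb0 _)]
    have e3 : (fun k => (Real.sqrt (b (n-k)) * a k)^2) = fun k => b (n-k) * (a k)^2 := by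
      funext k; rw [mul_pow, Real.sq_sqrt (hb0 _)]
    rw [e1, e2, e3, hbtsum n] at hcs
    have h0 : 0 ≤ ∑' k, b (n-k) * a k := tsum_nonneg fun k => mul_nonneg (hb0 _) (ha0 _)
    have hC : 0 ≤ ∑' k, b (n-k) * (a k)^2 := tsum_nonneg fun k => mul_nonneg (hb0 _) (sq_nonneg _)
    calc (∑' k, b (n-k) * a k)^2 ≤ (Real.sqrt B * Real.sqrt (∑' k, b (n-k) * (a k)^2))^2 := by
          apply sq_le_sq' _ hcs
          nlinarith [Real.sqrt_nonneg B, Real.sqrt_nonneg (∑' k, b (n-k) * (a k)^2)]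
    _ = B * ∑' k, b (n-k) * (a k)^2 := by
          rw [mul_pow, Real.sq_sqrt hBnn, Real.sq_sqrt hC]
  have hsum2 : Summable (fun n => (∑' k, b (n - k) * a k) ^ 2) := by
    apply Summable.of_nonneg_of_le (fun n => sq_nonneg _) hpt (houter.summable.mul_left B)
  refine ⟨hsum2, ?_⟩
  have hfinal : ∑' n, (∑' k, b (n - k) * a k) ^ 2 ≤ B * (B * T) := by
    calc ∑' n, (∑' k, b (n - k) * a k) ^ 2 ≤ ∑' n, B * ∑' k, b (n - k) * (a k)^2 :=
          Summable.tsum_le_tsum hpt hsum2 (houter.summable.mul_left B)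
    _ = B * ∑' n, ∑' k, b (n - k) * (a k)^2 := tsum_mul_left
    _ = B * (B * T) := by rw [houter.tsum_eq, htot]
  calc Real.sqrt (∑' n, (∑' k, b (n - k) * a k) ^ 2) ≤ Real.sqrt (B * (B * T)) :=
        Real.sqrt_le_sqrt hfinal
  _ = B * Real.sqrt T := by
      rw [← mul_assoc, ← sq, Real.sqrt_mul (sq_nonneg _), Real.sqrt_sq hBnn]


lemma le_sqrt_tsum_sq {x : ℤ → ℝ} (hx0 : ∀ n, 0 ≤ x n) (hx : Summable fun n => x n ^ 2)
    (k : ℤ) : x k ≤ Real.sqrt (∑' n, x n ^ 2) := by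
  have h1 : x k ^ 2 ≤ ∑' n, x n ^ 2 := Summable.le_tsum hx k fun j _ => sq_nonneg _
  calc x k = Real.sqrt (x k ^ 2) := (Real.sqrt_sq (hx0 k)).symm
  _ ≤ _ := Real.sqrt_le_sqrt h1

lemma g_sq (s : ℝ) (j : ℤ) : (jb j ^ (-s)) ^ 2 = jb j ^ (-(2 * s)) := by
  have h := jb_pos j
  rw [sq, ← Real.rpow_add h]
  ring_nf

/-- The central weighted convolution estimate. -/
lemma conv_est (ρ s : ℝ) (hρ : 0 < ρ) (hs : 1 ≤ s) (u : ℤ → ℂ)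
    (hu : Summable fun n => wt ρ s n ^ 2 * ‖u n‖ ^ 2)
    (a : ℤ → ℂ) (ha : Summable fun n => ‖a n‖ ^ 2) :
    (∀ n : ℤ, Summable fun k => ‖u (n - k) * (a k / (wt ρ s k : ℂ))‖) ∧
    Summable (fun n => (wt ρ s n * ‖∑' k, u (n - k) * (a k / (wt ρ s k : ℂ))‖) ^ 2) ∧
    Real.sqrt (∑' n, (wt ρ s n * ‖∑' k, u (n - k) * (a k / (wt ρ s k : ℂ))‖) ^ 2)
      ≤ Cs s * Real.sqrt (∑' n, wt ρ s n ^ 2 * ‖u n‖ ^ 2) * Real.sqrt (∑' n, ‖a n‖ ^ 2) := by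
  set w : ℤ → ℝ := wt ρ s with hw
  have hwpos : ∀ j, 0 < w j := fun j => wt_pos j
  set bU : ℤ → ℝ := fun j => w j * ‖u j‖ with hbU
  set g : ℤ → ℝ := fun j => jb j ^ (-s) with hgdef
  set α : ℤ → ℝ := fun k => ‖a k‖ with hα
  have hg0 : ∀ j, 0 ≤ g j := fun j => Real.rpow_nonneg (jb_pos j).le _
  have hbU0 : ∀ j, 0 ≤ bU j := fun j => mul_nonneg (hwpos j).le (norm_nonneg _)
  have hα0 : ∀ k, 0 ≤ α k := fun k => norm_nonneg _
  have hbU2 : ∀ j, bU j ^ 2 = w j ^ 2 * ‖u j‖ ^ 2 := fun j => by rw [hbU]; ring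
  have hbUsum : Summable fun j => bU j ^ 2 := by
    apply hu.congr; intro j; rw [hbU2]
  have hasum : Summable fun k => α k ^ 2 := ha
  have hg2 : Summable fun j => g j ^ 2 :=
    (summable_jb_neg s hs).congr fun j => (g_sq s j).symm
  set Ks : ℝ := Real.sqrt (∑' k : ℤ, jb k ^ (-(2*s))) with hKsdef
  have hKs : Real.sqrt (∑' j, g j ^ 2) = Ks := by
    rw [hKsdef]; congr 1; exact tsum_congr fun j => g_sq s j
  obtain ⟨hga_sum, hga_le⟩ := tsum_CS hg0 hα0 hg2 hasum
  obtain ⟨hgb_sum, hgb_le⟩ := tsum_CS hg0 hbU0 hg2 hbUsum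
  rw [hKs] at hga_le hgb_le
  -- pointwise term bound
  have hterm : ∀ n k : ℤ, w n * ‖u (n - k) * (a k / (w k : ℂ))‖ ≤
      (2:ℝ)^s * (bU (n - k) * (g k * α k) + (g (n-k) * bU (n-k)) * α k) := by
    intro n k
    have hnorm : ‖u (n - k) * (a k / (w k : ℂ))‖ = ‖u (n-k)‖ * (α k / w k) := by
      rw [norm_mul, norm_div, Complex.norm_real, Real.norm_of_nonneg (hwpos k).le, hα]
    rw [hnorm]
    have hsplit := wt_split hρ.le (by linarith : (0:ℝ) ≤ s) n k
    rw [← hw] at hsplit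
    have h0 : 0 ≤ ‖u (n-k)‖ * (α k / w k) :=
      mul_nonneg (norm_nonneg _) (div_nonneg (hα0 k) (hwpos k).le)
    calc w n * (‖u (n-k)‖ * (α k / w k))
        ≤ ((2:ℝ)^s * (w (n-k) * w k) * (g k + g (n-k))) * (‖u (n-k)‖ * (α k / w k)) :=
          mul_le_mul_of_nonneg_right hsplit h0
    _ = (2:ℝ)^s * (bU (n - k) * (g k * α k) + (g (n-k) * bU (n-k)) * α k) := by
          rw [hbU]
          have hk := (hwpos k).ne'
          field_simp
  -- summability of the comparison pieces in k
  have hC1in : ∀ n, Summable fun k => bU (n - k) * (g k * α k) := by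
    intro n
    apply Summable.of_nonneg_of_le (fun k => mul_nonneg (hbU0 _) (mul_nonneg (hg0 _) (hα0 _)))
      (fun k => ?_) (hga_sum.mul_left (Real.sqrt (∑' j, bU j ^ 2)))
    exact mul_le_mul_of_nonneg_right (le_sqrt_tsum_sq hbU0 hbUsum _)
      (mul_nonneg (hg0 _) (hα0 _))
  have hgbt : ∀ n : ℤ, Summable fun k => g (n - k) * bU (n - k) :=
    fun n => ((Equiv.subLeft n).summable_iff (f := fun j => g j * bU j)).2 hgb_sum
  have hC2in : ∀ n, Summable fun k => (g (n-k) * bU (n-k)) * α k := by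
    intro n
    apply Summable.of_nonneg_of_le
      (fun k => mul_nonneg (mul_nonneg (hg0 _) (hbU0 _)) (hα0 _))
      (fun k => ?_) ((hgbt n).mul_right (Real.sqrt (∑' j, α j ^ 2)))
    exact mul_le_mul_of_nonneg_left (le_sqrt_tsum_sq hα0 hasum _)
      (mul_nonneg (hg0 _) (hbU0 _))
  have hcmp : ∀ n, Summable fun k =>
      (2:ℝ)^s * (bU (n - k) * (g k * α k) + (g (n-k) * bU (n-k)) * α k) :=
    fun n => ((hC1in n).add (hC2in n)).mul_left _
  -- absolute convergence of the convolution
  have habs : ∀ n : ℤ, Summable fun k => ‖u (n - k) * (a k / (w k : ℂ))‖ := by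
    intro n
    apply Summable.of_nonneg_of_le (fun k => norm_nonneg _) (fun k => ?_)
      ((hcmp n).mul_left (w n)⁻¹)
    have h1 := hterm n k
    have h2 := hwpos n
    rw [inv_mul_eq_div, le_div_iff₀ h2, mul_comm]
    exact h1
  refine ⟨habs, ?_⟩
  set P : ℤ → ℝ := fun n => w n * ‖∑' k, u (n - k) * (a k / (w k : ℂ))‖ with hP
  have hP0 : ∀ n, 0 ≤ P n := fun n => mul_nonneg (hwpos n).le (norm_nonneg _)
  set C1 : ℤ → ℝ := fun n => ∑' k, (g (n-k) * α (n-k)) * bU k with hC1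
  set C2 : ℤ → ℝ := fun n => ∑' k, (g (n-k) * bU (n-k)) * α k with hC2
  obtain ⟨hy1in, hy1sum, hy1le⟩ := tsum_young (b := fun j => g j * α j) (a := bU)
    (fun j => mul_nonneg (hg0 j) (hα0 j)) hbU0 hga_sum hbUsum
  obtain ⟨hy2in, hy2sum, hy2le⟩ := tsum_young (b := fun j => g j * bU j) (a := α)
    (fun j => mul_nonneg (hg0 j) (hbU0 j)) hα0 hgb_sum hasum
  have hC1sum : Summable fun n => C1 n ^ 2 := hy1sum
  have hC2sum : Summable fun n => C2 n ^ 2 := hy2sum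
  have hC1nn : ∀ n, 0 ≤ C1 n := fun n => tsum_nonneg fun k =>
    mul_nonneg (mul_nonneg (hg0 _) (hα0 _)) (hbU0 _)
  have hC2nn : ∀ n, 0 ≤ C2 n := fun n => tsum_nonneg fun k =>
    mul_nonneg (mul_nonneg (hg0 _) (hbU0 _)) (hα0 _)
  -- pointwise bound P ≤ 2^s (C1 + C2)
  have hpt : ∀ n, P n ≤ (2:ℝ)^s * (C1 n + C2 n) := by
    intro n
    have h1 : P n ≤ ∑' k, w n * ‖u (n - k) * (a k / (w k : ℂ))‖ := by
      rw [tsum_mul_left]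
      exact mul_le_mul_of_nonneg_left (norm_tsum_le_tsum_norm (habs n)) (hwpos n).le
    have h2 : ∑' k, w n * ‖u (n - k) * (a k / (w k : ℂ))‖ ≤
        ∑' k, (2:ℝ)^s * (bU (n - k) * (g k * α k) + (g (n-k) * bU (n-k)) * α k) :=
      Summable.tsum_le_tsum (hterm n) ((habs n).mul_left _) (hcmp n)
    have hflip : (∑' k, bU (n - k) * (g k * α k)) = C1 n := by
      rw [hC1]
      have := (Equiv.subLeft n).tsum_eq (f := fun k => bU (n - k) * (g k * α k))
      simp only [Equiv.subLeft_apply, sub_sub_cancel] at this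
      rw [← this]
      exact tsum_congr fun k => by ring
    have h3 : ∑' k, (2:ℝ)^s * (bU (n - k) * (g k * α k) + (g (n-k) * bU (n-k)) * α k)
        = (2:ℝ)^s * (C1 n + C2 n) := by
      rw [tsum_mul_left, Summable.tsum_add (hC1in n) (hC2in n), hflip]
    calc P n ≤ _ := h1
    _ ≤ _ := h2
    _ = _ := h3
  have hyscaled : Summable fun n => ((2:ℝ)^s * (C1 n + C2 n)) ^ 2 := by
    obtain ⟨hmsum, _⟩ := tsum_minkowski hC1nn hC2nn hC1sum hC2sum
    apply (hmsum.mul_left (((2:ℝ)^s)^2)).congr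
    intro n; ring
  obtain ⟨hPsum, hPle⟩ := tsum_sq_mono hP0 hpt hyscaled
  refine ⟨hPsum, ?_⟩
  obtain ⟨hmsum, hmink⟩ := tsum_minkowski hC1nn hC2nn hC1sum hC2sum
  have h2s : (0:ℝ) ≤ (2:ℝ)^s := Real.rpow_nonneg (by norm_num) s
  have hsqrt_scaled : Real.sqrt (∑' n, ((2:ℝ)^s * (C1 n + C2 n)) ^ 2)
      = (2:ℝ)^s * Real.sqrt (∑' n, (C1 n + C2 n) ^ 2) := by
    have e1 : (fun n => ((2:ℝ)^s * (C1 n + C2 n)) ^ 2)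
        = fun n => ((2:ℝ)^s)^2 * (C1 n + C2 n) ^ 2 := by funext n; ring
    rw [e1, tsum_mul_left, Real.sqrt_mul (sq_nonneg _), Real.sqrt_sq h2s]
  set NB : ℝ := Real.sqrt (∑' j, bU j ^ 2) with hNB
  set NA : ℝ := Real.sqrt (∑' j, α j ^ 2) with hNA
  have hNBnn : 0 ≤ NB := Real.sqrt_nonneg _
  have hNAnn : 0 ≤ NA := Real.sqrt_nonneg _
  have hKnn : 0 ≤ Ks := Real.sqrt_nonneg _
  have hfin : Real.sqrt (∑' n, P n ^ 2) ≤ (2:ℝ)^s * (2 * (Ks * NB * NA)) := by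
    calc Real.sqrt (∑' n, P n ^ 2) ≤ Real.sqrt (∑' n, ((2:ℝ)^s * (C1 n + C2 n)) ^ 2) := hPle
    _ = (2:ℝ)^s * Real.sqrt (∑' n, (C1 n + C2 n) ^ 2) := hsqrt_scaled
    _ ≤ (2:ℝ)^s * (Real.sqrt (∑' n, C1 n ^2) + Real.sqrt (∑' n, C2 n ^2)) :=
          mul_le_mul_of_nonneg_left hmink h2s
    _ ≤ (2:ℝ)^s * ((∑' j, g j * α j) * NB + (∑' j, g j * bU j) * NA) := by
          apply mul_le_mul_of_nonneg_left _ h2s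
          exact add_le_add hy1le hy2le
    _ ≤ (2:ℝ)^s * ((Ks * NA) * NB + (Ks * NB) * NA) := by
          apply mul_le_mul_of_nonneg_left _ h2s
          apply add_le_add
          · exact mul_le_mul_of_nonneg_right hga_le hNBnn
          · exact mul_le_mul_of_nonneg_right hgb_le hNAnn
    _ = (2:ℝ)^s * (2 * (Ks * NB * NA)) := by ring
  have hCs : Cs s = (2:ℝ)^s * 2 * Ks := by
    rw [Cs, hKsdef, Real.rpow_add (by norm_num : (0:ℝ) < 2), Real.rpow_one]
  have hNBe : NB = Real.sqrt (∑' n, w n ^ 2 * ‖u n‖ ^ 2) := by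
    rw [hNB]; congr 1; exact tsum_congr hbU2
  calc Real.sqrt (∑' n, P n ^ 2) ≤ (2:ℝ)^s * (2 * (Ks * NB * NA)) := hfin
  _ = Cs s * NB * NA := by rw [hCs]; ring
  _ = _ := by rw [hNBe]

abbrev X := lp (fun _ : ℤ => ℂ) 2

lemma two_toReal : (2 : ENNReal).toReal = (2:ℝ) := by norm_num

lemma rpow_two_eq (x : ℝ) (hx : 0 ≤ x) : x ^ ((2:ENNReal).toReal) = x ^ 2 := by
  rw [two_toReal, show (2:ℝ) = ((2:ℕ):ℝ) by norm_num, Real.rpow_natCast]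

lemma lp2_mem {f : ℤ → ℂ} (h : Summable fun n => ‖f n‖ ^ 2) : Memℓp f 2 := by
  apply memℓp_gen
  exact h.congr fun n => (rpow_two_eq _ (norm_nonneg _)).symm

lemma lp2_summable (f : X) : Summable fun n => ‖(f : ℤ → ℂ) n‖ ^ 2 := by
  have h := lp.memℓp f
  rw [memℓp_gen_iff (by norm_num : 0 < (2:ENNReal).toReal)] at h
  exact h.congr fun n => rpow_two_eq _ (norm_nonneg _)

lemma lp2_norm (f : X) : ‖f‖ = Real.sqrt (∑' n, ‖(f : ℤ → ℂ) n‖ ^ 2) := by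
  have h := lp.norm_rpow_eq_tsum (by norm_num : 0 < (2:ENNReal).toReal) f
  rw [rpow_two_eq _ (norm_nonneg _)] at h
  have h2 : ∑' n, ‖(f : ℤ → ℂ) n‖ ^ (2:ENNReal).toReal = ∑' n, ‖(f : ℤ → ℂ) n‖ ^ 2 :=
    tsum_congr fun n => rpow_two_eq _ (norm_nonneg _)
  rw [h2] at h
  rw [← h, Real.sqrt_sq (norm_nonneg _)]

/-- The fixed point map for the gauge equation, in weighted coordinates. -/
def PhiRaw (ρ s κ : ℝ) (u : ℤ → ℂ) (a : ℤ → ℂ) : ℤ → ℂ :=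
  fun n => if 0 < n then (2*(n:ℂ)+(κ:ℂ))⁻¹ *
    ((wt ρ s n : ℂ) * u n - (wt ρ s n : ℂ) * ∑' k, u (n - k) * (a k / (wt ρ s k : ℂ)))
  else 0

lemma res_ne {κ : ℝ} (hκ : 0 < κ) {n : ℤ} (hn : 0 < n) : (2*(n:ℂ)+(κ:ℂ)) ≠ 0 := by
  have he : (2*(n:ℂ)+(κ:ℂ)) = ((2*(n:ℝ)+κ : ℝ) : ℂ) := by push_cast; ring
  rw [he]
  rw [Complex.ofReal_ne_zero]
  have : (1:ℝ) ≤ (n:ℝ) := by exact_mod_cast hn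
  nlinarith

lemma res_bound {κ : ℝ} (hκ : 0 < κ) {n : ℤ} (hn : 0 < n) :
    ‖(2*(n:ℂ)+(κ:ℂ))⁻¹‖ ≤ κ⁻¹ := by
  have he : (2*(n:ℂ)+(κ:ℂ)) = ((2*(n:ℝ)+κ : ℝ) : ℂ) := by push_cast; ring
  have h1 : (1:ℝ) ≤ (n:ℝ) := by exact_mod_cast hn
  rw [he, norm_inv, Complex.norm_real, Real.norm_of_nonneg (by nlinarith)]
  apply inv_anti₀ hκ
  nlinarith

/-- Pointwise bound for PhiRaw. -/
lemma phiRaw_ptwise (ρ s κ : ℝ) (hκ : 0 < κ) (u a : ℤ → ℂ) (n : ℤ) :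
    ‖PhiRaw ρ s κ u a n‖ ≤ κ⁻¹ *
      (wt ρ s n * ‖u n‖ + wt ρ s n * ‖∑' k, u (n - k) * (a k / (wt ρ s k : ℂ))‖) := by
  rw [PhiRaw]
  split_ifs with hn
  · rw [norm_mul]
    have h1 := res_bound hκ hn
    have h2 : ‖(wt ρ s n : ℂ) * u n - (wt ρ s n : ℂ) * ∑' k, u (n-k) * (a k / (wt ρ s k : ℂ))‖
        ≤ wt ρ s n * ‖u n‖ + wt ρ s n * ‖∑' k, u (n-k) * (a k / (wt ρ s k : ℂ))‖ := by
      refine (norm_sub_le _ _).trans ?_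
      rw [norm_mul, norm_mul, Complex.norm_real, Real.norm_of_nonneg (wt_pos n).le]
    exact mul_le_mul h1 h2 (norm_nonneg _) (by positivity)
  · rw [norm_zero]
    have h3 : 0 ≤ wt ρ s n * ‖u n‖ := mul_nonneg (wt_pos n).le (norm_nonneg _)
    have h4 : 0 ≤ wt ρ s n * ‖∑' k, u (n-k) * (a k / (wt ρ s k : ℂ))‖ :=
      mul_nonneg (wt_pos n).le (norm_nonneg _)
    positivity

lemma phiRaw_bound (ρ s κ : ℝ) (hρ : 0 < ρ) (hs : 1 ≤ s) (hκ : 0 < κ) (u : ℤ → ℂ)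
    (hu : Summable fun n => wt ρ s n ^ 2 * ‖u n‖ ^ 2)
    (a : ℤ → ℂ) (ha : Summable fun n => ‖a n‖ ^ 2) :
    Summable (fun n => ‖PhiRaw ρ s κ u a n‖ ^ 2) ∧
    Real.sqrt (∑' n, ‖PhiRaw ρ s κ u a n‖ ^ 2) ≤
      κ⁻¹ * (Real.sqrt (∑' n, wt ρ s n ^ 2 * ‖u n‖ ^ 2)
        + Cs s * Real.sqrt (∑' n, wt ρ s n ^ 2 * ‖u n‖ ^ 2) * Real.sqrt (∑' n, ‖a n‖ ^ 2)) := by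
  obtain ⟨habs, hPsum, hPle⟩ := conv_est ρ s hρ hs u hu a ha
  set p : ℤ → ℝ := fun n => wt ρ s n * ‖u n‖ with hp
  set q : ℤ → ℝ := fun n => wt ρ s n * ‖∑' k, u (n - k) * (a k / (wt ρ s k : ℂ))‖ with hq
  have hp0 : ∀ n, 0 ≤ p n := fun n => mul_nonneg (wt_pos n).le (norm_nonneg _)
  have hq0 : ∀ n, 0 ≤ q n := fun n => mul_nonneg (wt_pos n).le (norm_nonneg _)
  have hpe : ∀ n, p n ^ 2 = wt ρ s n ^ 2 * ‖u n‖ ^ 2 := fun n => by rw [hp]; ring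
  have hpsum : Summable fun n => p n ^ 2 := hu.congr fun n => (hpe n).symm
  have hpt : ∀ n, ‖PhiRaw ρ s κ u a n‖ ≤ κ⁻¹ * (p n + q n) := by
    intro n
    have := phiRaw_ptwise ρ s κ hκ u a n
    rw [mul_add]
    rw [mul_add] at this
    exact this
  have hscaled : Summable fun n => (κ⁻¹ * (p n + q n)) ^ 2 := by
    obtain ⟨hmsum, _⟩ := tsum_minkowski hp0 hq0 hpsum hPsum
    exact (hmsum.mul_left ((κ⁻¹)^2)).congr fun n => by ring
  obtain ⟨hsum, hle⟩ := tsum_sq_mono (fun n => norm_nonneg _) hpt hscaled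
  refine ⟨hsum, ?_⟩
  obtain ⟨hmsum, hmink⟩ := tsum_minkowski hp0 hq0 hpsum hPsum
  have hκinv : (0:ℝ) ≤ κ⁻¹ := inv_nonneg.2 hκ.le
  have hsq : Real.sqrt (∑' n, (κ⁻¹ * (p n + q n)) ^ 2)
      = κ⁻¹ * Real.sqrt (∑' n, (p n + q n) ^ 2) := by
    have e1 : (fun n => (κ⁻¹ * (p n + q n)) ^ 2) = fun n => (κ⁻¹)^2 * (p n + q n) ^ 2 := by
      funext n; ring
    rw [e1, tsum_mul_left, Real.sqrt_mul (sq_nonneg _), Real.sqrt_sq hκinv]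
  have hpeq : Real.sqrt (∑' n, p n ^ 2) = Real.sqrt (∑' n, wt ρ s n ^ 2 * ‖u n‖ ^ 2) := by
    congr 1; exact tsum_congr hpe
  calc Real.sqrt (∑' n, ‖PhiRaw ρ s κ u a n‖ ^ 2)
      ≤ Real.sqrt (∑' n, (κ⁻¹ * (p n + q n)) ^ 2) := hle
  _ = κ⁻¹ * Real.sqrt (∑' n, (p n + q n) ^ 2) := hsq
  _ ≤ κ⁻¹ * (Real.sqrt (∑' n, p n ^ 2) + Real.sqrt (∑' n, q n ^ 2)) :=
      mul_le_mul_of_nonneg_left hmink hκinv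
  _ ≤ κ⁻¹ * (Real.sqrt (∑' n, wt ρ s n ^ 2 * ‖u n‖ ^ 2)
        + Cs s * Real.sqrt (∑' n, wt ρ s n ^ 2 * ‖u n‖ ^ 2) * Real.sqrt (∑' n, ‖a n‖ ^ 2)) := by
      apply mul_le_mul_of_nonneg_left _ hκinv
      rw [hpeq]
      exact add_le_add le_rfl hPle

lemma phiRaw_sub (ρ s κ : ℝ) (hρ : 0 < ρ) (hs : 1 ≤ s) (hκ : 0 < κ) (u : ℤ → ℂ)
    (hu : Summable fun n => wt ρ s n ^ 2 * ‖u n‖ ^ 2)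
    (a a' : ℤ → ℂ) (ha : Summable fun n => ‖a n‖ ^ 2) (ha' : Summable fun n => ‖a' n‖ ^ 2)
    (n : ℤ) :
    PhiRaw ρ s κ u a n - PhiRaw ρ s κ u a' n =
      (if 0 < n then -((2*(n:ℂ)+(κ:ℂ))⁻¹ *
        ((wt ρ s n : ℂ) * ∑' k, u (n - k) * ((a k - a' k) / (wt ρ s k : ℂ)))) else 0) := by
  have S1 : Summable fun k => u (n - k) * (a k / (wt ρ s k : ℂ)) :=
    Summable.of_norm ((conv_est ρ s hρ hs u hu a ha).1 n)
  have S2 : Summable fun k => u (n - k) * (a' k / (wt ρ s k : ℂ)) :=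
    Summable.of_norm ((conv_est ρ s hρ hs u hu a' ha').1 n)
  have hts : ∑' k, u (n - k) * ((a k - a' k) / (wt ρ s k : ℂ))
      = (∑' k, u (n - k) * (a k / (wt ρ s k : ℂ)))
        - ∑' k, u (n - k) * (a' k / (wt ρ s k : ℂ)) := by
    rw [← Summable.tsum_sub S1 S2]
    apply tsum_congr
    intro k
    rw [sub_div, mul_sub]
  rw [PhiRaw, PhiRaw]
  split_ifs with hn
  · rw [hts]
    ring
  · simp

lemma phiRaw_lip (ρ s κ : ℝ) (hρ : 0 < ρ) (hs : 1 ≤ s) (hκ : 0 < κ) (u : ℤ → ℂ)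
    (hu : Summable fun n => wt ρ s n ^ 2 * ‖u n‖ ^ 2)
    (a a' : ℤ → ℂ) (ha : Summable fun n => ‖a n‖ ^ 2) (ha' : Summable fun n => ‖a' n‖ ^ 2)
    (hd : Summable fun n => ‖a n - a' n‖ ^ 2) :
    Summable (fun n => ‖PhiRaw ρ s κ u a n - PhiRaw ρ s κ u a' n‖ ^ 2) ∧
    Real.sqrt (∑' n, ‖PhiRaw ρ s κ u a n - PhiRaw ρ s κ u a' n‖ ^ 2) ≤
      κ⁻¹ * Cs s * Real.sqrt (∑' n, wt ρ s n ^ 2 * ‖u n‖ ^ 2) *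
        Real.sqrt (∑' n, ‖a n - a' n‖ ^ 2) := by
  obtain ⟨habs, hPsum, hPle⟩ := conv_est ρ s hρ hs u hu (fun k => a k - a' k) hd
  set q : ℤ → ℝ := fun n =>
    wt ρ s n * ‖∑' k, u (n - k) * ((a k - a' k) / (wt ρ s k : ℂ))‖ with hq
  have hq0 : ∀ n, 0 ≤ q n := fun n => mul_nonneg (wt_pos n).le (norm_nonneg _)
  have hpt : ∀ n, ‖PhiRaw ρ s κ u a n - PhiRaw ρ s κ u a' n‖ ≤ κ⁻¹ * q n := by
    intro n
    rw [phiRaw_sub ρ s κ hρ hs hκ u hu a a' ha ha' n]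
    split_ifs with hn
    · rw [norm_neg, norm_mul, norm_mul, Complex.norm_real, Real.norm_of_nonneg (wt_pos n).le]
      exact mul_le_mul_of_nonneg_right (res_bound hκ hn)
        (mul_nonneg (wt_pos n).le (norm_nonneg _))
    · rw [norm_zero]
      exact mul_nonneg (inv_nonneg.2 hκ.le) (hq0 n)
  have hscaled : Summable fun n => (κ⁻¹ * q n) ^ 2 :=
    (hPsum.mul_left ((κ⁻¹)^2)).congr fun n => by rw [hq]; ring
  obtain ⟨hsum, hle⟩ := tsum_sq_mono (fun n => norm_nonneg _) hpt hscaled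
  refine ⟨hsum, ?_⟩
  have hκinv : (0:ℝ) ≤ κ⁻¹ := inv_nonneg.2 hκ.le
  have hsq : Real.sqrt (∑' n, (κ⁻¹ * q n) ^ 2) = κ⁻¹ * Real.sqrt (∑' n, q n ^ 2) := by
    have e1 : (fun n => (κ⁻¹ * q n) ^ 2) = fun n => (κ⁻¹)^2 * q n ^ 2 := by funext n; ring
    rw [e1, tsum_mul_left, Real.sqrt_mul (sq_nonneg _), Real.sqrt_sq hκinv]
  calc Real.sqrt (∑' n, ‖PhiRaw ρ s κ u a n - PhiRaw ρ s κ u a' n‖ ^ 2)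
      ≤ Real.sqrt (∑' n, (κ⁻¹ * q n) ^ 2) := hle
  _ = κ⁻¹ * Real.sqrt (∑' n, q n ^ 2) := hsq
  _ ≤ κ⁻¹ * (Cs s * Real.sqrt (∑' n, wt ρ s n ^ 2 * ‖u n‖ ^ 2) *
        Real.sqrt (∑' n, ‖a n - a' n‖ ^ 2)) := mul_le_mul_of_nonneg_left hPle hκinv
  _ = _ := by ring

lemma Cs_pos {s : ℝ} (hs : 1 ≤ s) : 0 < Cs s := by
  rw [Cs]
  apply mul_pos (Real.rpow_pos_of_pos (by norm_num) _)
  apply Real.sqrt_pos.2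
  apply Summable.tsum_pos (summable_jb_neg s hs) (fun k => Real.rpow_nonneg (jb_pos k).le _) 0
  exact Real.rpow_pos_of_pos (jb_pos 0) _

lemma wt_succ (ρ s : ℝ) (n : ℤ) : wt ρ (s+1) n = jb n * wt ρ s n := by
  rw [wt, wt, Real.rpow_add (jb_pos n), Real.rpow_one]
  ring

lemma jb_le_res {κ : ℝ} (hκ : 0 < κ) {n : ℤ} (hn : 0 < n) : jb n ≤ 2*(n:ℝ) + κ := by
  have h1 : (1:ℝ) ≤ (n:ℝ) := by exact_mod_cast hn
  have h2 : jb n ≤ 2*(n:ℝ) := by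
    rw [jb]
    rw [show (2*(n:ℝ)) = Real.sqrt ((2*(n:ℝ))^2) from (Real.sqrt_sq (by linarith)).symm]
    apply Real.sqrt_le_sqrt
    nlinarith
  linarith


set_option maxHeartbeats 2000000 in
/-- For `s ≥ 1`, `ρ > 0`, real zero-mean `u ∈ H₀^{ρ,s}` with
`‖u‖_{ρ,s} ≤ M` and `κ > 100 C_s M`, the gauge variable
`m(κ,u) = (L_u+κ)⁻¹ u₊` (the unique solution of `(L_u+κ)m = u₊` in `H₊^{ρ,s}`)
belongs to `H₊^{ρ,s+1}`, satisfies `‖m‖_{ρ,s} ≤ ‖u‖_{ρ,s}/(κ - C_s‖u‖_{ρ,s})`,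
solves `-2i∂ₓm + C₊(u(m-1)) + κm = 0`, and its spatial derivative is the
bounded multilinear expression `∂ₓm = -(i/2)(κm + C₊(u(m-1)))`. -/
theorem gauge_variable (ρ s M κ : ℝ) (hρ : 0 < ρ) (hs : 1 ≤ s) (hM : 0 < M)
    (u : ℤ → ℂ) (hu : MemH ρ s u) (hu0 : u 0 = 0) (hur : IsReal u)
    (huM : anorm ρ s u ≤ M) (hκ : 100 * Cs s * M < κ) :
    ∃ m : ℤ → ℂ,
      MemHplus ρ s m ∧
      (∀ n : ℤ, LaxOp u m n + (κ : ℂ) * m n = Cplus u n) ∧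
      (∀ m' : ℤ → ℂ, MemHplus ρ s m' →
        (∀ n : ℤ, LaxOp u m' n + (κ : ℂ) * m' n = Cplus u n) → m' = m) ∧
      MemHplus ρ (s + 1) m ∧
      anorm ρ s m ≤ anorm ρ s u / (κ - Cs s * anorm ρ s u) ∧
      (∀ n : ℤ, 2 * (n : ℂ) * m n +
          Cplus (fmul u (fun k => m k - delta0 k)) n + (κ : ℂ) * m n = 0) ∧
      (∀ n : ℤ, dx m n =
        -(Complex.I / 2) *
          ((κ : ℂ) * m n + Cplus (fmul u (fun k => m k - delta0 k)) n)) := by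
  classical
  have hu' : Summable fun n => wt ρ s n ^ 2 * ‖u n‖ ^ 2 := hu
  have hCs : 0 < Cs s := Cs_pos hs
  have hκ0 : (0:ℝ) < κ := lt_trans (by nlinarith) hκ
  have hwne : ∀ n : ℤ, (wt ρ s n : ℂ) ≠ 0 := fun n => Complex.ofReal_ne_zero.2 (wt_pos n).ne'
  set N : ℝ := Real.sqrt (∑' n, wt ρ s n ^ 2 * ‖u n‖ ^ 2) with hN
  have hNanorm : anorm ρ s u = N := rfl
  have hNM : N ≤ M := by rw [← hNanorm]; exact huM
  have hN0 : 0 ≤ N := Real.sqrt_nonneg _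
  -- the fixed point map
  have hmem : ∀ a : X, Memℓp (PhiRaw ρ s κ u a) 2 := fun a =>
    lp2_mem (phiRaw_bound ρ s κ hρ hs hκ0 u hu' a (lp2_summable a)).1
  set Φ : X → X := fun a => ⟨PhiRaw ρ s κ u a, hmem a⟩ with hΦ
  have hΦcoe : ∀ (a : X) (n : ℤ), (Φ a : ℤ → ℂ) n = PhiRaw ρ s κ u (a : ℤ → ℂ) n :=
    fun a n => rfl
  -- contraction
  set q : NNReal := Real.toNNReal (Cs s * M / κ) with hqdef
  have hq1 : (q : ℝ) = Cs s * M / κ := Real.coe_toNNReal _ (by positivity)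
  have hqlt : q < 1 := by
    have h2 : Cs s * M / κ < 1 := by
      rw [div_lt_one hκ0]
      nlinarith
    have : (q:ℝ) < ((1:NNReal):ℝ) := by rw [hq1]; simpa using h2
    exact_mod_cast this
  have hlip : LipschitzWith q Φ := by
    apply LipschitzWith.of_dist_le_mul
    intro a a'
    rw [dist_eq_norm, dist_eq_norm, lp2_norm, lp2_norm]
    have hcoe : ∀ n : ℤ, ((a - a' : X) : ℤ → ℂ) n = (a : ℤ → ℂ) n - (a' : ℤ → ℂ) n :=
      fun n => by rw [lp.coeFn_sub]; rfl
    have hcoe2 : ∀ n : ℤ, ((Φ a - Φ a' : X) : ℤ → ℂ) n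
        = PhiRaw ρ s κ u (a : ℤ → ℂ) n - PhiRaw ρ s κ u (a' : ℤ → ℂ) n :=
      fun n => by rw [lp.coeFn_sub]; rfl
    have hd : Summable fun n => ‖(a : ℤ → ℂ) n - (a' : ℤ → ℂ) n‖ ^ 2 :=
      (lp2_summable (a - a')).congr fun n => by rw [hcoe n]
    obtain ⟨hs1, hs2⟩ := phiRaw_lip ρ s κ hρ hs hκ0 u hu' (a : ℤ → ℂ) (a' : ℤ → ℂ)
      (lp2_summable a) (lp2_summable a') hd
    have e1 : (∑' n, ‖((Φ a - Φ a' : X) : ℤ → ℂ) n‖ ^ 2)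
        = ∑' n, ‖PhiRaw ρ s κ u (a : ℤ → ℂ) n - PhiRaw ρ s κ u (a' : ℤ → ℂ) n‖ ^ 2 :=
      tsum_congr fun n => by rw [hcoe2 n]
    have e2 : (∑' n, ‖((a - a' : X) : ℤ → ℂ) n‖ ^ 2)
        = ∑' n, ‖(a : ℤ → ℂ) n - (a' : ℤ → ℂ) n‖ ^ 2 :=
      tsum_congr fun n => by rw [hcoe n]
    rw [e1, e2]
    refine hs2.trans ?_
    rw [hq1]
    have hsq : (0:ℝ) ≤ Real.sqrt (∑' n, ‖(a : ℤ → ℂ) n - (a' : ℤ → ℂ) n‖ ^ 2) :=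
      Real.sqrt_nonneg _
    have hNeq : Real.sqrt (∑' n, wt ρ s n ^ 2 * ‖u n‖ ^ 2) = N := rfl
    rw [hNeq]
    have : κ⁻¹ * Cs s * N ≤ Cs s * M / κ := by
      rw [div_eq_mul_inv]
      have h1 : Cs s * N ≤ Cs s * M := mul_le_mul_of_nonneg_left hNM hCs.le
      have h2 : (0:ℝ) ≤ κ⁻¹ := inv_nonneg.2 hκ0.le
      nlinarith
    exact mul_le_mul_of_nonneg_right this hsq
  have hcontr : ContractingWith q Φ := ⟨hqlt, hlip⟩
  set afix : X := ContractingWith.fixedPoint Φ hcontr with hafix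
  have hfix : Φ afix = afix := hcontr.fixedPoint_isFixedPt
  set A : ℤ → ℂ := (afix : ℤ → ℂ) with hA
  have hAeq : ∀ n, PhiRaw ρ s κ u A n = A n := by
    intro n
    conv_rhs => rw [hA, ← hfix]
  have hA2 : Summable fun n => ‖A n‖ ^ 2 := lp2_summable afix
  set m : ℤ → ℂ := fun n => A n / (wt ρ s n : ℂ) with hm
  have hmA : ∀ n, A n = (wt ρ s n : ℂ) * m n := by
    intro n
    show A n = (wt ρ s n : ℂ) * (A n / (wt ρ s n : ℂ))
    rw [mul_comm, div_mul_cancel₀ _ (hwne n)]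
  have hsupp : ∀ n : ℤ, n ≤ 0 → m n = 0 := by
    intro n hn
    have h := hAeq n
    rw [PhiRaw, if_neg (not_lt.2 hn)] at h
    rw [hm]
    simp [← h]
  -- key identity
  have hconv_eq : ∀ n : ℤ, (∑' k, u (n - k) * (A k / (wt ρ s k : ℂ)))
      = ∑' k, u (n - k) * m k := fun n => tsum_congr fun k => by rw [hm]
  have hkey : ∀ n : ℤ, 0 < n →
      (2*(n:ℂ)+(κ:ℂ)) * m n = u n - ∑' k, u (n - k) * m k := by
    intro n hn
    have h := hAeq n
    rw [PhiRaw, if_pos hn] at h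
    have hne := res_ne hκ0 hn
    have h2 : (wt ρ s n : ℂ) * u n - (wt ρ s n : ℂ) * ∑' k, u (n-k) * m k
        = (2*(n:ℂ)+(κ:ℂ)) * A n := by
      rw [← h, hconv_eq n]
      field_simp
    rw [hmA n] at h2
    have hw := hwne n
    have h3 : (wt ρ s n : ℂ) * ((2*(n:ℂ)+(κ:ℂ)) * m n)
        = (wt ρ s n : ℂ) * (u n - ∑' k, u (n - k) * m k) := by
      linear_combination -h2
    exact mul_left_cancel₀ hw h3
  -- equation
  have heq : ∀ n : ℤ, LaxOp u m n + (κ : ℂ) * m n = Cplus u n := by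
    intro n
    rw [LaxOp, Toep, Cplus, Cplus]
    by_cases hn : 0 < n
    · rw [if_pos hn, if_pos hn, fmul]
      have hk := hkey n hn
      linear_combination hk
    · rw [if_neg hn, if_neg hn, hsupp n (not_lt.1 hn)]
      ring
  -- membership in H^{ρ,s}
  have hm2 : Summable fun n => wt ρ s n ^ 2 * ‖m n‖ ^ 2 := by
    apply hA2.congr
    intro n
    rw [hmA n, norm_mul, Complex.norm_real, Real.norm_of_nonneg (wt_pos n).le]
    ring
  have hmemplus : MemHplus ρ s m := ⟨hm2, hsupp⟩
  -- norm of m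
  have hanm : anorm ρ s m = ‖afix‖ := by
    rw [anorm, lp2_norm]
    congr 1
    apply tsum_congr
    intro n
    rw [← hA, hmA n, norm_mul, Complex.norm_real, Real.norm_of_nonneg (wt_pos n).le]
    ring
  have hCsN : Cs s * N < κ := by nlinarith
  have hnormbound : anorm ρ s m ≤ anorm ρ s u / (κ - Cs s * anorm ρ s u) := by
    rw [hanm, hNanorm]
    set x : ℝ := ‖afix‖ with hx
    have hx0 : 0 ≤ x := norm_nonneg _
    obtain ⟨_, hb⟩ := phiRaw_bound ρ s κ hρ hs hκ0 u hu' A hA2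
    have hxa : x = Real.sqrt (∑' n, ‖A n‖ ^ 2) := lp2_norm afix
    have hxPhi : x = Real.sqrt (∑' n, ‖PhiRaw ρ s κ u A n‖ ^ 2) := by
      have h1 : (∑' n, ‖(Φ afix : ℤ → ℂ) n‖ ^ 2) = ∑' n, ‖PhiRaw ρ s κ u A n‖ ^ 2 :=
        tsum_congr fun n => by rw [hΦcoe afix n, ← hA]
      rw [hx, ← hfix, lp2_norm (Φ afix), h1]
    have hineq : x ≤ κ⁻¹ * (N + Cs s * N * x) := by
      have hb' := hb
      rw [← hN, ← hxa] at hb'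
      calc x = Real.sqrt (∑' n, ‖PhiRaw ρ s κ u A n‖ ^ 2) := hxPhi
      _ ≤ κ⁻¹ * (N + Cs s * N * x) := hb'
    have hpos : 0 < κ - Cs s * N := by linarith
    rw [le_div_iff₀ hpos]
    have : κ * x ≤ N + Cs s * N * x := by
      have := mul_le_mul_of_nonneg_left hineq hκ0.le
      calc κ * x ≤ κ * (κ⁻¹ * (N + Cs s * N * x)) := this
      _ = N + Cs s * N * x := by field_simp
    nlinarith
  -- membership in H^{ρ,s+1}
  obtain ⟨habsA, hq2sum, _⟩ := conv_est ρ s hρ hs u hu' A hA2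
  set p : ℤ → ℝ := fun n => wt ρ s n * ‖u n‖ with hp
  set q2 : ℤ → ℝ := fun n => wt ρ s n * ‖∑' k, u (n - k) * (A k / (wt ρ s k : ℂ))‖ with hq2
  have hp0 : ∀ n, 0 ≤ p n := fun n => mul_nonneg (wt_pos n).le (norm_nonneg _)
  have hq20 : ∀ n, 0 ≤ q2 n := fun n => mul_nonneg (wt_pos n).le (norm_nonneg _)
  have hpsum : Summable fun n => p n ^ 2 := hu'.congr fun n => by rw [hp]; ring
  obtain ⟨hpq2sum, _⟩ := tsum_minkowski hp0 hq20 hpsum hq2sum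
  have hptw : ∀ n : ℤ, wt ρ (s+1) n ^ 2 * ‖m n‖ ^ 2 ≤ (p n + q2 n) ^ 2 := by
    intro n
    by_cases hn : 0 < n
    · have h1 : wt ρ (s+1) n * ‖m n‖ ≤ p n + q2 n := by
        rw [wt_succ]
        have h2 : jb n * wt ρ s n * ‖m n‖ ≤ (2*(n:ℝ)+κ) * (wt ρ s n * ‖m n‖) := by
          rw [mul_assoc]
          apply mul_le_mul_of_nonneg_right (jb_le_res hκ0 hn)
            (mul_nonneg (wt_pos n).le (norm_nonneg _))
        refine h2.trans ?_
        have h3 : (2*(n:ℝ)+κ) * (wt ρ s n * ‖m n‖)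
            = wt ρ s n * ‖(2*(n:ℂ)+(κ:ℂ)) * m n‖ := by
          rw [norm_mul]
          have : ‖(2*(n:ℂ)+(κ:ℂ))‖ = 2*(n:ℝ)+κ := by
            rw [show (2*(n:ℂ)+(κ:ℂ)) = ((2*(n:ℝ)+κ : ℝ) : ℂ) by push_cast; ring,
              Complex.norm_real, Real.norm_of_nonneg]
            have : (1:ℝ) ≤ (n:ℝ) := by exact_mod_cast hn
            nlinarith
          rw [this]
          ring
        rw [h3, hkey n hn]
        have h4 : ‖u n - ∑' k, u (n - k) * m k‖ ≤ ‖u n‖ + ‖∑' k, u (n - k) * m k‖ :=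
          norm_sub_le _ _
        have h5 : wt ρ s n * ‖u n - ∑' k, u (n - k) * m k‖
            ≤ wt ρ s n * (‖u n‖ + ‖∑' k, u (n - k) * m k‖) :=
          mul_le_mul_of_nonneg_left h4 (wt_pos n).le
        refine h5.trans (le_of_eq ?_)
        rw [hp, hq2, hconv_eq n]
        ring
      have h0 : 0 ≤ wt ρ (s+1) n * ‖m n‖ := mul_nonneg (wt_pos n).le (norm_nonneg _)
      calc wt ρ (s+1) n ^ 2 * ‖m n‖ ^ 2 = (wt ρ (s+1) n * ‖m n‖) ^ 2 := by ring
      _ ≤ (p n + q2 n) ^ 2 := by nlinarith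
    · rw [hsupp n (not_lt.1 hn)]
      simp only [norm_zero]
      nlinarith [hp0 n, hq20 n]
  have hmem1 : Summable fun n => wt ρ (s+1) n ^ 2 * ‖m n‖ ^ 2 :=
    Summable.of_nonneg_of_le
      (fun n => mul_nonneg (sq_nonneg _) (sq_nonneg _)) hptw hpq2sum
  have hmemplus1 : MemHplus ρ (s+1) m := ⟨hmem1, hsupp⟩
  -- uniqueness
  have huniq : ∀ m' : ℤ → ℂ, MemHplus ρ s m' →
      (∀ n : ℤ, LaxOp u m' n + (κ : ℂ) * m' n = Cplus u n) → m' = m := by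
    intro m' hm' heq'
    set a' : ℤ → ℂ := fun n => (wt ρ s n : ℂ) * m' n with ha'
    have ha'sum : Summable fun n => ‖a' n‖ ^ 2 := by
      apply hm'.1.congr
      intro n
      rw [ha', norm_mul, Complex.norm_real, Real.norm_of_nonneg (wt_pos n).le]
      ring
    set A' : X := ⟨a', lp2_mem ha'sum⟩ with hA'
    have hcoeA' : (A' : ℤ → ℂ) = a' := rfl
    have hfixA' : Φ A' = A' := by
      apply Subtype.ext
      funext n
      rw [hΦcoe A' n, hcoeA']
      rw [PhiRaw]
      by_cases hn : 0 < n
      · rw [if_pos hn]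
        have he := heq' n
        rw [LaxOp, Toep, Cplus, Cplus, if_pos hn, if_pos hn, fmul] at he
        have hconv' : (∑' k, u (n - k) * (a' k / (wt ρ s k : ℂ)))
            = ∑' k, u (n - k) * m' k := by
          apply tsum_congr
          intro k
          have hdiv : a' k / (wt ρ s k : ℂ) = m' k := by
            show ((wt ρ s k : ℂ) * m' k) / (wt ρ s k : ℂ) = m' k
            rw [mul_comm, mul_div_assoc, div_self (hwne k), mul_one]
          rw [hdiv]
        rw [hconv']
        have hne := res_ne hκ0 hn
        show (2*(n:ℂ)+(κ:ℂ))⁻¹ *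
            ((wt ρ s n : ℂ) * u n - (wt ρ s n : ℂ) * ∑' k, u (n - k) * m' k)
          = (wt ρ s n : ℂ) * m' n
        rw [inv_mul_eq_iff_eq_mul₀ hne]
        linear_combination (-(wt ρ s n : ℂ)) * he
      · rw [if_neg hn]
        show (0:ℂ) = (wt ρ s n : ℂ) * m' n
        rw [hm'.2 n (not_lt.1 hn), mul_zero]
    have hAA : A' = afix := hcontr.fixedPoint_unique hfixA'
    funext n
    have hval : a' n = A n := congrArg (fun (f : X) => (f : ℤ → ℂ) n) hAA
    have hcan : (wt ρ s n : ℂ) * m' n = (wt ρ s n : ℂ) * m n := by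
      calc (wt ρ s n : ℂ) * m' n = a' n := rfl
      _ = A n := hval
      _ = (wt ρ s n : ℂ) * m n := hmA n
    exact mul_left_cancel₀ (hwne n) hcan
  -- delta convolution
  have hdelta : ∀ n : ℤ, fmul u (fun k => m k - delta0 k) n = fmul u m n - u n := by
    intro n
    rw [fmul, fmul]
    have S1 : Summable fun k => u (n - k) * m k := by
      apply Summable.of_norm
      apply (habsA n).congr
      intro k
      rw [hm]
    have S2 : Summable fun k => u (n - k) * delta0 k := by
      apply summable_of_ne_finset_zero (s := {0})
      intro k hk
      have : delta0 k = 0 := by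
        rw [delta0, if_neg]
        simpa using hk
      rw [this, mul_zero]
    have e1 : (∑' k, u (n - k) * (m k - delta0 k))
        = (∑' k, u (n - k) * m k) - ∑' k, u (n - k) * delta0 k := by
      rw [← Summable.tsum_sub S1 S2]
      exact tsum_congr fun k => by ring
    rw [e1]
    congr 1
    rw [tsum_eq_single 0 (fun k hk => by
      have : delta0 k = 0 := by rw [delta0, if_neg hk]
      rw [this, mul_zero])]
    rw [delta0, if_pos rfl, sub_zero, mul_one]
  have hbullet : ∀ n : ℤ, 2 * (n : ℂ) * m n +
      Cplus (fmul u (fun k => m k - delta0 k)) n + (κ : ℂ) * m n = 0 := by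
    intro n
    rw [Cplus]
    by_cases hn : 0 < n
    · rw [if_pos hn, hdelta n, fmul]
      have hk := hkey n hn
      linear_combination hk
    · rw [if_neg hn, hsupp n (not_lt.1 hn)]
      ring
  have hdx : ∀ n : ℤ, dx m n = -(Complex.I / 2) *
      ((κ : ℂ) * m n + Cplus (fmul u (fun k => m k - delta0 k)) n) := by
    intro n
    rw [dx]
    have h := hbullet n
    linear_combination (Complex.I / 2) * h
  exact ⟨m, hmemplus, heq, huniq, hmemplus1, hnormbound, hbullet, hdx⟩


end BO
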